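/- Entropy Box Theorem: given discrete random variables X₁,…,Xₙ with finite joint entropy H(X), there exist nonnegative reals h₁,…,hₙ such that H(X) = ∑_{i=1}^n h_i and for every A ⊆ [n], H(X_A | X_{A*}) ≤ ∑_{i∈A} h_i ≤ H(X_A | X_{A_*}), where for A with minimal element a and maximal element b, A_* = {1,…,a-1} and A* = {i ∉ A : 1 ≤ i ≤ b-1}. (One may take h_i = H(X_i | X_{[i-1]}).) -/

import Mathlib

open Finset

/-- Probability that the discrete random variable `X` takes the value `v`,
where `p` is the probability mass function on the finite sample space `Ω`. -/
noncomputable def probOf {Ω S : Type*} [Fintype Ω] [DecidableEq S]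
    (p : Ω → ℝ) (X : Ω → S) (v : S) : ℝ :=
  ∑ ω ∈ univ.filter (fun ω => X ω = v), p ω

/-- Shannon entropy (base 2) of a discrete random variable. -/
noncomputable def H {Ω S : Type*} [Fintype Ω] [DecidableEq S]
    (p : Ω → ℝ) (X : Ω → S) : ℝ :=
  -∑ v ∈ univ.image X, probOf p X v * Real.logb 2 (probOf p X v)

/-- Conditional Shannon entropy `H(X | Y)`. -/
noncomputable def condH {Ω S T : Type*} [Fintype Ω] [DecidableEq S] [DecidableEq T]
    (p : Ω → ℝ) (X : Ω → S) (Y : Ω → T) : ℝ :=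
  -∑ v ∈ univ.image (fun ω => (X ω, Y ω)),
      probOf p (fun ω => (X ω, Y ω)) v *
        Real.logb 2 (probOf p (fun ω => (X ω, Y ω)) v / probOf p Y v.2)

/-- Joint entropy of the subfamily `(X i)_{i ∈ A}`. -/
noncomputable def jointH {Ω S : Type*} [Fintype Ω] [DecidableEq S] {n : ℕ}
    (p : Ω → ℝ) (X : Fin n → Ω → S) (A : Finset (Fin n)) : ℝ :=
  H p (fun ω (i : {i // i ∈ A}) => X i.1 ω)

/-- Conditional joint entropy `H(X_A | X_B)`. -/
noncomputable def condJointH {Ω S : Type*} [Fintype Ω] [DecidableEq S] {n : ℕ}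
    (p : Ω → ℝ) (X : Fin n → Ω → S) (A B : Finset (Fin n)) : ℝ :=
  condH p (fun ω (i : {i // i ∈ A}) => X i.1 ω) (fun ω (i : {i // i ∈ B}) => X i.1 ω)

/-!
The set function `A ↦ H(X_A)` is monotone and submodular: monotonicity is `H(X | Y) ≥ 0`, and
submodularity is Shannon's inequality `H(X,Y,Z) + H(Z) ≤ H(X,Z) + H(Y,Z)`, a Gibbs inequality
against the coupling of `(X,Z)` and `(Y,Z)` that is conditionally independent given `Z`.
For any submodular `f` the prefix increments `h i = f [1,i] - f [1,i)` satisfy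
`h i ≤ f (C ∪ {i}) - f C` whenever `C` lies below `i`; adding these up over `A` gives
`∑_{i∈A} h i ≤ f (A ∪ B) - f B` for every `B` lying below `A`, which is the upper bound with
`B = A_*`. Since the increments telescope over `[1, max A]`, applying the same bound to
`C = A*` (with `B = ∅`) yields the lower bound.
-/

open Real

def IsSubmodular {α : Type*} [DecidableEq α] (f : Finset α → ℝ) : Prop :=
  ∀ U W, f (U ∪ W) + f (U ∩ W) ≤ f U + f W

section PrefixIncrement
variable {α : Type*} [LinearOrder α] [LocallyFiniteOrderBot α] {f : Finset α → ℝ}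

def prefixIncrement (f : Finset α → ℝ) (i : α) : ℝ :=
  f (Iic i) - f (Iio i)

lemma prefixIncrement_nonneg (hf : Monotone f) (i : α) : 0 ≤ prefixIncrement f i :=
  sub_nonneg.2 (hf Iio_subset_Iic_self)

lemma prefixIncrement_le_sub (hf : IsSubmodular f) {C : Finset α} {b : α} (hC : C ⊆ Iio b) :
    prefixIncrement f b ≤ f (insert b C) - f C := by
  have h := hf (Iio b) (insert b C)
  rw [union_insert, union_eq_left.2 hC, Iio_insert,
    inter_insert_of_notMem notMem_Iio_self, inter_eq_right.2 hC] at h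
  rw [prefixIncrement]
  linarith

lemma sum_prefixIncrement_le_sub (hf : IsSubmodular f) {A B : Finset α}
    (hBA : ∀ i ∈ A, ∀ j ∈ B, j < i) :
    ∑ i ∈ A, prefixIncrement f i ≤ f (A ∪ B) - f B := by
  induction A using Finset.induction_on_max with
  | empty => simp
  | insert b A hlt ih =>
    have hbA : b ∉ A := fun h => (hlt b h).false
    have hAB : A ∪ B ⊆ Iio b := fun i hi => mem_Iio.2 <| (mem_union.1 hi).elim (hlt i)
      (hBA b (mem_insert_self b A) i)
    have hb := prefixIncrement_le_sub hf hAB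
    have hA := ih fun i hi => hBA i (mem_insert_of_mem hi)
    rw [sum_insert hbA, insert_union]
    linarith

lemma sum_prefixIncrement_of_isLowerSet {A : Finset α} (hA : IsLowerSet (A : Set α)) :
    ∑ i ∈ A, prefixIncrement f i = f A - f ∅ := by
  induction A using Finset.induction_on_max with
  | empty => simp
  | insert b A hlt ih =>
    have hA' : A = Iio b := by
      ext i
      refine ⟨fun hi => mem_Iio.2 (hlt i hi), fun hi => ?_⟩
      have hi' : i ∈ insert b A := hA (mem_Iio.1 hi).le (mem_insert_self b A)
      exact (mem_insert.1 hi').resolve_left (mem_Iio.1 hi).ne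
    subst hA'
    rw [sum_insert notMem_Iio_self, ih (by simpa using isLowerSet_Iio b), Iio_insert,
      prefixIncrement]
    ring

lemma sum_prefixIncrement_le_of_min (hf : IsSubmodular f) {A : Finset α} (hA : A.Nonempty) :
    ∑ i ∈ A, prefixIncrement f i ≤ f (A ∪ Iio (A.min' hA)) - f (Iio (A.min' hA)) :=
  sum_prefixIncrement_le_sub hf fun i hi _ hj => (mem_Iio.1 hj).trans_le (A.min'_le i hi)

lemma le_sum_prefixIncrement_of_max (hf : IsSubmodular f) {A : Finset α} (hA : A.Nonempty) :
    f (A ∪ (Iio (A.max' hA) \ A)) - f (Iio (A.max' hA) \ A) ≤ ∑ i ∈ A, prefixIncrement f i := by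
  set b := A.max' hA
  set C := Iio b \ A
  have hAC : A ∪ C = Iic b := by
    ext i
    simp only [C, mem_union, mem_sdiff, mem_Iio, mem_Iic]
    constructor
    · rintro (hi | ⟨hi, -⟩)
      exacts [A.le_max' i hi, hi.le]
    · intro hi
      rcases hi.lt_or_eq with hi | rfl
      exacts [or_iff_not_imp_left.2 fun h => ⟨hi, h⟩, Or.inl (A.max'_mem hA)]
  have hIic : ∑ i ∈ A ∪ C, prefixIncrement f i = f (A ∪ C) - f ∅ :=
    sum_prefixIncrement_of_isLowerSet (by simpa [hAC] using isLowerSet_Iic b)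
  have hC : ∑ i ∈ C, prefixIncrement f i ≤ f C - f ∅ := by
    simpa using sum_prefixIncrement_le_sub (f := f) (A := C) (B := ∅) hf (by simp)
  rw [sum_union disjoint_sdiff] at hIic
  linarith

end PrefixIncrement

lemma mul_logb_two_le {q r : ℝ} (hq : 0 ≤ q) (hr : 0 < r) :
    q * logb 2 r ≤ (q * r - q) / log 2 := by
  rw [logb, mul_div_assoc', ← mul_sub_one]
  exact div_le_div_of_nonneg_right (mul_le_mul_of_nonneg_left (log_le_sub_one_of_pos hr) hq)
    (log_nonneg one_le_two)

section Entropy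
variable {Ω S T U : Type*} [Fintype Ω] [DecidableEq S] [DecidableEq T] [DecidableEq U]
  {p : Ω → ℝ}

lemma probOf_nonneg (hp : ∀ ω, 0 ≤ p ω) (X : Ω → S) (v : S) : 0 ≤ probOf p X v :=
  sum_nonneg fun ω _ => hp ω

lemma probOf_self_pos (hp : ∀ ω, 0 ≤ p ω) (X : Ω → S) {ω : Ω} (hω : p ω ≠ 0) :
    0 < probOf p X (X ω) :=
  (lt_of_le_of_ne (hp ω) hω.symm).trans_le <|
    single_le_sum (fun ω _ => hp ω) (mem_filter.2 ⟨mem_univ ω, rfl⟩)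

lemma probOf_le_probOf_comp (hp : ∀ ω, 0 ≤ p ω) (X : Ω → S) (f : S → T) (v : S) :
    probOf p X v ≤ probOf p (fun ω => f (X ω)) (f v) :=
  sum_le_sum_of_subset_of_nonneg
    (fun ω hω => mem_filter.2 ⟨mem_univ ω, congrArg f (mem_filter.1 hω).2⟩)
    fun ω _ _ => hp ω

lemma probOf_self_congr {X : Ω → S} {Y : Ω → T} (h : ∀ ω ω', X ω = X ω' ↔ Y ω = Y ω')
    (ω : Ω) : probOf p X (X ω) = probOf p Y (Y ω) :=
  sum_congr (filter_congr fun ω' _ => h ω' ω) fun _ _ => rfl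

lemma sum_image_probOf_mul (X : Ω → S) (g : S → ℝ) :
    ∑ v ∈ univ.image X, probOf p X v * g v = ∑ ω, p ω * g (X ω) := by
  rw [← sum_fiberwise_of_maps_to (fun ω _ => mem_image_of_mem X (mem_univ ω))
    (fun ω => p ω * g (X ω))]
  refine sum_congr rfl fun v _ => ?_
  rw [probOf, sum_mul]
  exact sum_congr rfl fun ω hω => by rw [(mem_filter.1 hω).2]

lemma sum_image_probOf (X : Ω → S) : ∑ v ∈ univ.image X, probOf p X v = ∑ ω, p ω := by
  simpa using sum_image_probOf_mul (p := p) X 1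

lemma sum_probOf_filter_comp (X : Ω → S) (f : S → T) (w : T) :
    ∑ v ∈ univ.image X with f v = w, probOf p X v = probOf p (fun ω => f (X ω)) w := by
  have h := sum_image_probOf_mul (p := p) X fun v => if f v = w then 1 else 0
  simp only [mul_ite, mul_one, mul_zero, ← sum_filter] at h
  exact h

lemma H_eq_sum (X : Ω → S) : H p X = -∑ ω, p ω * logb 2 (probOf p X (X ω)) :=
  congrArg Neg.neg (sum_image_probOf_mul X fun v => logb 2 (probOf p X v))

lemma condH_eq_sum (X : Ω → S) (Y : Ω → T) :
    condH p X Y = -∑ ω, p ω *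
      logb 2 (probOf p (fun ω => (X ω, Y ω)) (X ω, Y ω) / probOf p Y (Y ω)) :=
  congrArg Neg.neg <| sum_image_probOf_mul (fun ω => (X ω, Y ω))
    fun v => logb 2 (probOf p (fun ω => (X ω, Y ω)) v / probOf p Y v.2)

lemma H_congr {X : Ω → S} {Y : Ω → T} (h : ∀ ω ω', X ω = X ω' ↔ Y ω = Y ω') :
    H p X = H p Y := by
  simp only [H_eq_sum, probOf_self_congr h]

lemma H_const (hsum : ∑ ω, p ω = 1) (c : S) : H p (fun _ => c) = 0 := by
  have h : probOf p (fun _ : Ω => c) c = 1 := by simpa [probOf] using hsum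
  simp [H_eq_sum, h]

lemma condH_eq_sub (hp : ∀ ω, 0 ≤ p ω) (X : Ω → S) (Y : Ω → T) :
    condH p X Y = H p (fun ω => (X ω, Y ω)) - H p Y := by
  have h : ∀ ω, p ω * logb 2 (probOf p (fun ω => (X ω, Y ω)) (X ω, Y ω) / probOf p Y (Y ω))
      = p ω * logb 2 (probOf p (fun ω => (X ω, Y ω)) (X ω, Y ω))
        - p ω * logb 2 (probOf p Y (Y ω)) := by
    intro ω
    rcases eq_or_ne (p ω) 0 with hω | hω
    · simp [hω]
    rw [logb_div (probOf_self_pos hp (fun ω => (X ω, Y ω)) hω).ne'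
      (probOf_self_pos hp Y hω).ne', mul_sub]
  simp only [condH_eq_sum, H_eq_sum, h, sum_sub_distrib]
  ring

lemma condH_nonneg (hp : ∀ ω, 0 ≤ p ω) (X : Ω → S) (Y : Ω → T) : 0 ≤ condH p X Y := by
  rw [condH_eq_sum, neg_nonneg]
  refine sum_nonpos fun ω _ => mul_nonpos_of_nonneg_of_nonpos (hp ω) ?_
  have hle := probOf_le_probOf_comp hp (fun ω => (X ω, Y ω)) Prod.snd (X ω, Y ω)
  exact logb_nonpos one_lt_two (div_nonneg (probOf_nonneg hp _ _) (probOf_nonneg hp _ _))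
    (div_le_one_of_le₀ hle (probOf_nonneg hp _ _))

lemma sum_image_condIndep_le (hp : ∀ ω, 0 ≤ p ω) (X : Ω → S) (Y : Ω → T) (Z : Ω → U) :
    ∑ v ∈ univ.image (fun ω => (X ω, Y ω, Z ω)),
      probOf p (fun ω => (X ω, Z ω)) (v.1, v.2.2) * probOf p (fun ω => (Y ω, Z ω)) v.2
        / probOf p Z v.2.2 ≤ ∑ ω, p ω := by
  set Pxz := probOf p (fun ω => (X ω, Z ω))
  set Pyz := probOf p (fun ω => (Y ω, Z ω))
  set Pz := probOf p Z
  have hF : ∀ q : (S × U) × (T × U), 0 ≤ Pxz q.1 * Pyz q.2 / Pz q.1.2 := fun q =>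
    div_nonneg (mul_nonneg (probOf_nonneg hp _ _) (probOf_nonneg hp _ _)) (probOf_nonneg hp _ _)
  calc _ = ∑ q ∈ (univ.image fun ω => (X ω, Y ω, Z ω)).image fun v => ((v.1, v.2.2), v.2),
        Pxz q.1 * Pyz q.2 / Pz q.1.2 := by
        have hinj : Function.Injective fun v : S × T × U => ((v.1, v.2.2), v.2) :=
          fun v w h => by
            simp only [Prod.mk.injEq] at h
            exact Prod.ext h.1.1 h.2
        rw [sum_image hinj.injOn]
    _ ≤ ∑ q ∈ (univ.image fun ω => (X ω, Z ω)) ×ˢ (univ.image fun ω => (Y ω, Z ω))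
          with q.2.2 = q.1.2, Pxz q.1 * Pyz q.2 / Pz q.1.2 := by
        refine sum_le_sum_of_subset_of_nonneg (fun q hq => ?_) fun q _ _ => hF q
        obtain ⟨v, hv, rfl⟩ := mem_image.1 hq
        obtain ⟨ω, -, rfl⟩ := mem_image.1 hv
        exact mem_filter.2 ⟨mem_product.2
          ⟨mem_image_of_mem _ (mem_univ ω), mem_image_of_mem _ (mem_univ ω)⟩, rfl⟩
    _ = ∑ u ∈ univ.image fun ω => (X ω, Z ω),
          Pxz u / Pz u.2 * ∑ w ∈ univ.image (fun ω => (Y ω, Z ω)) with w.2 = u.2, Pyz w := by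
        rw [sum_filter, sum_product]
        refine sum_congr rfl fun u _ => ?_
        rw [mul_sum, sum_filter]
        refine sum_congr rfl fun w _ => ?_
        split_ifs with h
        · rw [← h]
          ring
        · rfl
    _ = ∑ u ∈ univ.image fun ω => (X ω, Z ω), Pxz u / Pz u.2 * Pz u.2 := by
        simp only [Pyz, sum_probOf_filter_comp]
        rfl
    _ ≤ ∑ u ∈ univ.image fun ω => (X ω, Z ω), Pxz u := by
        refine sum_le_sum fun u _ => ?_
        rcases eq_or_ne (Pz u.2) 0 with h | h
        · simpa [h] using probOf_nonneg hp _ _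
        · rw [div_mul_cancel₀ _ h]
    _ = ∑ ω, p ω := sum_image_probOf _

lemma sum_mul_condIndep_ratio_le (hp : ∀ ω, 0 ≤ p ω) (X : Ω → S) (Y : Ω → T) (Z : Ω → U) :
    ∑ ω, p ω * (probOf p (fun ω => (X ω, Z ω)) (X ω, Z ω)
      * probOf p (fun ω => (Y ω, Z ω)) (Y ω, Z ω) / probOf p Z (Z ω)
      / probOf p (fun ω => (X ω, Y ω, Z ω)) (X ω, Y ω, Z ω)) ≤ ∑ ω, p ω := by
  set Pxyz := probOf p (fun ω => (X ω, Y ω, Z ω))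
  set Q : S × T × U → ℝ := fun v =>
    probOf p (fun ω => (X ω, Z ω)) (v.1, v.2.2) * probOf p (fun ω => (Y ω, Z ω)) v.2
      / probOf p Z v.2.2
  calc _ = ∑ v ∈ univ.image (fun ω => (X ω, Y ω, Z ω)), Pxyz v * (Q v / Pxyz v) :=
        (sum_image_probOf_mul (fun ω => (X ω, Y ω, Z ω)) fun v => Q v / Pxyz v).symm
    _ ≤ ∑ v ∈ univ.image (fun ω => (X ω, Y ω, Z ω)), Q v := by
        refine sum_le_sum fun v _ => ?_
        rcases eq_or_ne (Pxyz v) 0 with h | h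
        · rw [h, zero_mul]
          exact div_nonneg (mul_nonneg (probOf_nonneg hp _ _) (probOf_nonneg hp _ _))
            (probOf_nonneg hp _ _)
        · rw [mul_div_cancel₀ _ h]
    _ ≤ ∑ ω, p ω := sum_image_condIndep_le hp X Y Z

lemma H_submodular (hp : ∀ ω, 0 ≤ p ω) (X : Ω → S) (Y : Ω → T) (Z : Ω → U) :
    H p (fun ω => (X ω, Y ω, Z ω)) + H p Z
      ≤ H p (fun ω => (X ω, Z ω)) + H p (fun ω => (Y ω, Z ω)) := by
  set Pxyz := probOf p (fun ω => (X ω, Y ω, Z ω))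
  set Pxz := probOf p (fun ω => (X ω, Z ω))
  set Pyz := probOf p (fun ω => (Y ω, Z ω))
  set Pz := probOf p Z
  set r : Ω → ℝ := fun ω => Pxz (X ω, Z ω) * Pyz (Y ω, Z ω) / Pz (Z ω) / Pxyz (X ω, Y ω, Z ω)
  have hpoint : ∀ ω, p ω * logb 2 (Pxz (X ω, Z ω)) + p ω * logb 2 (Pyz (Y ω, Z ω))
      - p ω * logb 2 (Pz (Z ω)) - p ω * logb 2 (Pxyz (X ω, Y ω, Z ω))
      ≤ (p ω * r ω - p ω) / log 2 := by
    intro ω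
    rcases eq_or_ne (p ω) 0 with hω | hω
    · simp [hω]
    have hxyz := probOf_self_pos hp (fun ω => (X ω, Y ω, Z ω)) hω
    have hxz := probOf_self_pos hp (fun ω => (X ω, Z ω)) hω
    have hyz := probOf_self_pos hp (fun ω => (Y ω, Z ω)) hω
    have hz := probOf_self_pos hp Z hω
    have hlog : logb 2 (r ω) = logb 2 (Pxz (X ω, Z ω)) + logb 2 (Pyz (Y ω, Z ω))
        - logb 2 (Pz (Z ω)) - logb 2 (Pxyz (X ω, Y ω, Z ω)) := by
      rw [logb_div (by positivity) hxyz.ne', logb_div (by positivity) hz.ne',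
        logb_mul hxz.ne' hyz.ne']
    calc _ = p ω * logb 2 (r ω) := by rw [hlog]; ring
      _ ≤ _ := mul_logb_two_le (hp ω) (by positivity)
  have hsum := sum_le_sum fun ω (_ : ω ∈ univ) => hpoint ω
  rw [← sum_div, sum_sub_distrib] at hsum
  have hneg : (∑ ω, p ω * r ω - ∑ ω, p ω) / log 2 ≤ 0 :=
    div_nonpos_of_nonpos_of_nonneg (by linarith [sum_mul_condIndep_ratio_le hp X Y Z])
      (log_nonneg one_le_two)
  simp only [H_eq_sum, sum_sub_distrib, sum_add_distrib] at hsum ⊢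
  linarith

end Entropy

section Subfamily
variable {Ω S : Type*} [Fintype Ω] [DecidableEq S] {n : ℕ} {p : Ω → ℝ} (X : Fin n → Ω → S)

lemma H_eq_jointH {T : Type*} [DecidableEq T] {V : Ω → T} {A : Finset (Fin n)}
    (h : ∀ ω ω', V ω = V ω' ↔ ∀ i ∈ A, X i ω = X i ω') : H p V = jointH p X A :=
  H_congr fun ω ω' => (h ω ω').trans <| by simp [funext_iff]

lemma condJointH_eq_sub (hp : ∀ ω, 0 ≤ p ω) (A B : Finset (Fin n)) :
    condJointH p X A B = jointH p X (A ∪ B) - jointH p X B := by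
  rw [condJointH, condH_eq_sub hp]
  congr 1
  exact H_eq_jointH X fun ω ω' => by simp [funext_iff, or_imp, forall_and]

lemma jointH_empty (hsum : ∑ ω, p ω = 1) : jointH p X ∅ = 0 := by
  rw [← H_const hsum (), H_eq_jointH X (V := fun _ => ()) (A := ∅) (by simp)]

lemma jointH_mono (hp : ∀ ω, 0 ≤ p ω) : Monotone (jointH p X) := fun A B hAB => by
  have h := condJointH_eq_sub X hp B A
  rw [union_eq_left.2 hAB] at h
  linarith [show 0 ≤ condJointH p X B A from condH_nonneg hp _ _]

lemma jointH_submodular (hp : ∀ ω, 0 ≤ p ω) : IsSubmodular (jointH p X) := fun U W => by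
  convert H_submodular hp (fun ω (i : {i // i ∈ U}) => X i.1 ω)
    (fun ω (i : {i // i ∈ W}) => X i.1 ω) (fun ω (i : {i // i ∈ U ∩ W}) => X i.1 ω) using 2
  all_goals refine (H_eq_jointH X fun ω ω' => ?_).symm
  all_goals simp only [Prod.mk.injEq, funext_iff, Subtype.forall, mem_union, mem_inter]
  all_goals grind

end Subfamily

/-- Entropy Box Theorem: there are nonnegative `h₁,…,hₙ` summing to `H(X)` with
`H(X_A ∣ X_{A*}) ≤ ∑_{i∈A} hᵢ ≤ H(X_A ∣ X_{A_*})` for all nonempty `A ⊆ [n]`,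
where `A_* = {1,…,min A - 1}` and `A* = {1,…,max A - 1} ∖ A`. -/
theorem entropy_box_theorem {Ω S : Type*} [Fintype Ω] [DecidableEq S] {n : ℕ}
    (p : Ω → ℝ) (hp : ∀ ω, 0 ≤ p ω) (hsum : ∑ ω, p ω = 1)
    (X : Fin n → Ω → S) :
    ∃ h : Fin n → ℝ, (∀ i, 0 ≤ h i) ∧ jointH p X univ = ∑ i, h i ∧
      ∀ A : Finset (Fin n), ∀ hA : A.Nonempty,
        condJointH p X A (Finset.Iio (A.max' hA) \ A) ≤ ∑ i ∈ A, h i ∧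
        ∑ i ∈ A, h i ≤ condJointH p X A (Finset.Iio (A.min' hA)) := by
  refine ⟨prefixIncrement (jointH p X), prefixIncrement_nonneg (jointH_mono X hp), ?_,
    fun A hA => ⟨?_, ?_⟩⟩
  · rw [sum_prefixIncrement_of_isLowerSet (by rw [coe_univ]; exact isLowerSet_univ),
      jointH_empty X hsum, sub_zero]
  · rw [condJointH_eq_sub X hp]
    exact le_sum_prefixIncrement_of_max (jointH_submodular X hp) hA
  · rw [condJointH_eq_sub X hp]
    exact sum_prefixIncrement_le_of_min (jointH_submodular X hp) hA
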